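/- arXiv:math/0606272 — 4 statements merged into one kernel-verified Lean document; each statement's English description precedes it below -/
import Mathlib

section
/- Let V be a gl_m-module. Then the following defines an action of the degenerate affine Hecke algebra H_N on V ⊗ (C^m)^{⊗N}: the symmetric group S_N ⊂ H_N acts by permuting the N tensor factors C^m, and the element y_p = x_p − σ_{1p} − ... − σ_{p−1,p} acts as Σ_{a,b=1}^m E_{ba} ⊗ E_{ab}^{(p)}, where E_{ab}^{(p)} applies the matrix unit E_{ab} in the p-th tensor factor. Moreover, this H_N-action commutes with the diagonal gl_m-action. -/
open Equiv (swap)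

/-- Defining relations of the degenerate affine Hecke algebra `H_N`:
it is generated by the symmetric group (generators `Sum.inl σ`) and by
pairwise commuting elements `x_1, …, x_N` (generators `Sum.inr p`), with
the cross relations `σ_p x_q = x_q σ_p` for `q ≠ p, p+1` and
`σ_p x_p = x_{p+1} σ_p - 1`, where `σ_p` is the transposition `(p, p+1)`. -/
inductive HeckeRel (N : ℕ) :
    FreeAlgebra ℂ (Equiv.Perm (Fin N) ⊕ Fin N) →
    FreeAlgebra ℂ (Equiv.Perm (Fin N) ⊕ Fin N) → Prop
  | group_one :
      HeckeRel N (FreeAlgebra.ι ℂ (Sum.inl 1)) 1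
  | group_mul (σ τ : Equiv.Perm (Fin N)) :
      HeckeRel N (FreeAlgebra.ι ℂ (Sum.inl σ) * FreeAlgebra.ι ℂ (Sum.inl τ))
        (FreeAlgebra.ι ℂ (Sum.inl (σ * τ)))
  | x_comm (p q : Fin N) :
      HeckeRel N (FreeAlgebra.ι ℂ (Sum.inr p) * FreeAlgebra.ι ℂ (Sum.inr q))
        (FreeAlgebra.ι ℂ (Sum.inr q) * FreeAlgebra.ι ℂ (Sum.inr p))
  | cross1 (p : Fin N) (hp : (p : ℕ) + 1 < N) (q : Fin N)
      (h1 : q ≠ p) (h2 : q ≠ ⟨(p : ℕ) + 1, hp⟩) :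
      HeckeRel N
        (FreeAlgebra.ι ℂ (Sum.inl (swap p ⟨(p : ℕ) + 1, hp⟩)) * FreeAlgebra.ι ℂ (Sum.inr q))
        (FreeAlgebra.ι ℂ (Sum.inr q) * FreeAlgebra.ι ℂ (Sum.inl (swap p ⟨(p : ℕ) + 1, hp⟩)))
  | cross2 (p : Fin N) (hp : (p : ℕ) + 1 < N) :
      HeckeRel N
        (FreeAlgebra.ι ℂ (Sum.inl (swap p ⟨(p : ℕ) + 1, hp⟩)) * FreeAlgebra.ι ℂ (Sum.inr p))
        (FreeAlgebra.ι ℂ (Sum.inr ⟨(p : ℕ) + 1, hp⟩) *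
          FreeAlgebra.ι ℂ (Sum.inl (swap p ⟨(p : ℕ) + 1, hp⟩)) - 1)

/-- The degenerate affine Hecke algebra `H_N`. -/
abbrev DAHA (N : ℕ) := RingQuot (HeckeRel N)

/-- The image of a permutation `σ ∈ S_N` in `H_N` (i.e. the embedding of `ℂ S_N`). -/
noncomputable def dahaGroup (N : ℕ) (σ : Equiv.Perm (Fin N)) : DAHA N :=
  RingQuot.mkAlgHom ℂ (HeckeRel N) (FreeAlgebra.ι ℂ (Sum.inl σ))

/-- The commuting generators `x_p` of `H_N`. -/
noncomputable def dahaX (N : ℕ) (p : Fin N) : DAHA N :=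
  RingQuot.mkAlgHom ℂ (HeckeRel N) (FreeAlgebra.ι ℂ (Sum.inr p))

/-- The elements `y_p = x_p - σ_{1p} - … - σ_{p-1,p}` of `H_N`. -/
noncomputable def dahaY (N : ℕ) (p : Fin N) : DAHA N :=
  dahaX N p - ∑ q ∈ Finset.univ.filter (fun q => q < p), dahaGroup N (swap q p)

/- We model the tensor product `V ⊗ (ℂ^m)^{⊗N}` as the space of functions
`(Fin N → Fin m) → V`, recording the coefficient of the basis vector
`e_{g(1)} ⊗ … ⊗ e_{g(N)}` of `(ℂ^m)^{⊗N}` at `g : Fin N → Fin m`. -/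

variable {V : Type*} [AddCommGroup V] [Module ℂ V]

/-- The permutation action of `σ ∈ S_N` on `V ⊗ (ℂ^m)^{⊗N}`, permuting the
`N` tensor factors `ℂ^m` (so that `e_g ↦ e_{g ∘ σ⁻¹}`). -/
noncomputable def permL (m N : ℕ) (σ : Equiv.Perm (Fin N)) :
    Module.End ℂ ((Fin N → Fin m) → V) where
  toFun F := fun h => F (h ∘ σ)
  map_add' _ _ := rfl
  map_smul' _ _ := rfl

/-- The operator `Σ_{a,b} E_{ba} ⊗ E_{ab}^{(p)}` on `V ⊗ (ℂ^m)^{⊗N}`, where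
`ρ b a` is the action of the matrix unit `E_{ba} ∈ gl_m` on `V` and
`E_{ab}^{(p)}` is the matrix unit acting in the `p`-th tensor factor `ℂ^m`. -/
noncomputable def yL (m N : ℕ) (ρ : Fin m → Fin m → Module.End ℂ V) (p : Fin N) :
    Module.End ℂ ((Fin N → Fin m) → V) where
  toFun F := fun h => ∑ b : Fin m, ρ b (h p) (F (Function.update h p b))
  map_add' F G := by
    funext h
    simp [Finset.sum_add_distrib]
  map_smul' c F := by
    funext h
    simp [Finset.smul_sum]

/-- The diagonal action of the matrix unit `E_{ab} ∈ gl_m` on `V ⊗ (ℂ^m)^{⊗N}`,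
namely `E_{ab} ⊗ 1 ⊗ … ⊗ 1 + Σ_p 1 ⊗ … ⊗ E_{ab}^{(p)} ⊗ … ⊗ 1`. -/
noncomputable def glDiagL (m N : ℕ) (ρ : Fin m → Fin m → Module.End ℂ V) (a b : Fin m) :
    Module.End ℂ ((Fin N → Fin m) → V) where
  toFun F := fun h => ρ a b (F h) +
    ∑ p : Fin N, if h p = a then F (Function.update h p b) else 0
  map_add' F G := by
    funext h
    have key : ∀ p : Fin N,
        (if h p = a then F (Function.update h p b) + G (Function.update h p b) else 0)
          = (if h p = a then F (Function.update h p b) else 0)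
            + (if h p = a then G (Function.update h p b) else 0) := by
      intro p; split <;> simp
    simp only [Pi.add_apply, map_add, key, Finset.sum_add_distrib]
    abel
  map_smul' c F := by
    funext h
    have key : ∀ p : Fin N,
        (if h p = a then c • F (Function.update h p b) else 0)
          = c • (if h p = a then F (Function.update h p b) else 0) := by
      intro p; split <;> simp
    simp only [Pi.smul_apply, map_smul, key, ← Finset.smul_sum, RingHom.id_apply,
      smul_add]

/-!
Since `x_p = y_p + Σ_{q<p} σ_{qp}`, to represent `H_N` it suffices to give a representation `s`
of `S_N` and elements `y_p` with `s(σ) y_p = y_{σ p} s(σ)` and `[y_p, y_q] = s(p q) (y_p - y_q)`: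
the relations among the `x_p` then follow from these two and the commutativity of the
Jucys–Murphy elements `Σ_{q<p} σ_{qp}`. For `y_p = Σ_{a,b} E_{ba} ⊗ E_{ab}^{(p)}` equivariance is
clear, and the `gl_m` relations in `V` turn `[y_p, y_q]` into the flip `(p q)` applied to
`y_p - y_q`. Finally `y_p` acts only on `V ⊗ ℂ^m_{(p)}`, where it is `gl_m`-invariant, so it
commutes with the diagonal action, as do the permutations.
-/

open Finset

lemma swap_apply_lt_iff {α : Type*} [LinearOrder α] {a b p : α} (h : a < p ↔ b < p) (x : α) :
    swap a b x < p ↔ x < p := by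
  rw [Equiv.swap_apply_def]
  split_ifs with hxa hxb
  · rw [hxa, h]
  · rw [hxb, h]
  · rfl

section JucysMurphy

variable {A : Type*} [Ring A] {N : ℕ} (s : Equiv.Perm (Fin N) →* A)

def jucysMurphy (p : Fin N) : A :=
  ∑ q ∈ univ.filter (fun q => q < p), s (swap q p)

lemma mul_jucysMurphy (t : Equiv.Perm (Fin N)) (p : Fin N) :
    s t * jucysMurphy s p
      = (∑ q ∈ univ.filter (fun q => q < p), s (swap (t q) (t p))) * s t := by
  simp only [jucysMurphy, mul_sum, sum_mul, ← map_mul, Equiv.mul_swap_eq_swap_mul]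

lemma commute_jucysMurphy_of_apply_eq {t : Equiv.Perm (Fin N)} {p : Fin N} (htp : t p = p)
    (hlt : ∀ r, t r < p ↔ r < p) : Commute (s t) (jucysMurphy s p) := by
  rw [Commute, SemiconjBy, mul_jucysMurphy, htp, jucysMurphy]
  congr 1
  exact sum_equiv t (fun q => by simp [hlt]) (fun _ _ => rfl)

lemma jucysMurphy_commute (p q : Fin N) : Commute (jucysMurphy s p) (jucysMurphy s q) := by
  wlog hqp : q < p generalizing p q
  · obtain rfl | hpq := (not_lt.1 hqp).eq_or_lt
    · exact Commute.refl _
    · exact (this q p hpq).symm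
  refine Commute.sum_right _ _ _ fun r hr => ?_
  have hrp : r < p := (mem_filter.1 hr).2.trans hqp
  exact (commute_jucysMurphy_of_apply_eq s (Equiv.swap_apply_of_ne_of_ne hrp.ne' hqp.ne')
    (swap_apply_lt_iff (iff_of_true hrp hqp))).symm

end JucysMurphy

section HeckeX

variable {A : Type*} [Ring A] {N : ℕ} (s : Equiv.Perm (Fin N) →* A) (y : Fin N → A)

def heckeX (p : Fin N) : A := y p + jucysMurphy s p

def IsPermEquivariant : Prop := ∀ σ p, s σ * y p = y (σ p) * s σ

def HasHeckeCommutators : Prop :=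
  ∀ p q, p ≠ q → y p * y q - y q * y p = s (swap p q) * (y p - y q)

variable {s y}

lemma IsPermEquivariant.commute_of_apply_eq (hy : IsPermEquivariant s y)
    {t : Equiv.Perm (Fin N)} {p : Fin N} (htp : t p = p) : Commute (s t) (y p) := by
  rw [Commute, SemiconjBy, hy, htp]

lemma IsPermEquivariant.commute_jucysMurphy_of_lt (hy : IsPermEquivariant s y) {p q : Fin N}
    (hqp : q < p) : Commute (y p) (jucysMurphy s q) :=
  Commute.sum_right _ _ _ fun _ hr =>
    (hy.commute_of_apply_eq
      (Equiv.swap_apply_of_ne_of_ne ((mem_filter.1 hr).2.trans hqp).ne' hqp.ne')).symm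

lemma IsPermEquivariant.jucysMurphy_mul_sub_mul (hy : IsPermEquivariant s y) {p q : Fin N}
    (hqp : q < p) :
    jucysMurphy s p * y q - y q * jucysMurphy s p = y p * s (swap q p) - s (swap q p) * y p := by
  have hq : q ∈ univ.filter (fun r => r < p) := by simp [hqp]
  rw [jucysMurphy, sum_mul, mul_sum, ← sum_sub_distrib,
    sum_eq_single_of_mem q hq fun _ _ hrq => ?_, hy, Equiv.swap_apply_left, sub_right_inj]
  · rw [hy, Equiv.swap_apply_right]
  · rw [sub_eq_zero]
    exact hy.commute_of_apply_eq (Equiv.swap_apply_of_ne_of_ne hrq.symm hqp.ne)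

lemma IsPermEquivariant.heckeX_commute (hy : IsPermEquivariant s y) (hyy : HasHeckeCommutators s y)
    (p q : Fin N) : Commute (heckeX s y p) (heckeX s y q) := by
  wlog hqp : q < p generalizing p q
  · obtain rfl | hpq := (not_lt.1 hqp).eq_or_lt
    · exact Commute.refl _
    · exact (this q p hpq).symm
  have hJ := jucysMurphy_commute s p q
  have hyJ := hy.commute_jucysMurphy_of_lt hqp
  have hcomm := hy.jucysMurphy_mul_sub_mul hqp
  have hyy' := hyy p q hqp.ne'
  have hswap : s (swap q p) * y q = y p * s (swap q p) := by rw [hy, Equiv.swap_apply_left]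
  rw [Commute, SemiconjBy, ← sub_eq_zero]
  calc heckeX s y p * heckeX s y q - heckeX s y q * heckeX s y p
      = (y p * y q - y q * y p) + (jucysMurphy s p * y q - y q * jucysMurphy s p)
          + (y p * jucysMurphy s q - jucysMurphy s q * y p)
          + (jucysMurphy s p * jucysMurphy s q - jucysMurphy s q * jucysMurphy s p) := by
        simp only [heckeX]
        noncomm_ring
    _ = 0 := by
        -- what survives is `y_p s - s y_q` with `s = s (swap q p)`, zero by equivariance
        rw [hyy', hcomm, hyJ.eq, hJ.eq, Equiv.swap_comm, mul_sub, hswap]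
        abel

lemma IsPermEquivariant.commute_heckeX_of_apply_eq (hy : IsPermEquivariant s y)
    {t : Equiv.Perm (Fin N)} {p : Fin N} (htp : t p = p) (hlt : ∀ r, t r < p ↔ r < p) :
    Commute (s t) (heckeX s y p) :=
  (hy.commute_of_apply_eq htp).add_right (commute_jucysMurphy_of_apply_eq s htp hlt)

lemma IsPermEquivariant.swap_mul_heckeX_of_covBy (hy : IsPermEquivariant s y) {p p' : Fin N}
    (hcov : p ⋖ p') :
    s (swap p p') * heckeX s y p = heckeX s y p' * s (swap p p') - 1 := by
  have hsplit : univ.filter (fun r => r < p') = insert p (univ.filter (fun r => r < p)) := by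
    ext r
    simp [hcov.lt_iff_le_left, le_iff_lt_or_eq, or_comm]
  have hJ : jucysMurphy s p'
      = s (swap p p') + ∑ r ∈ univ.filter (fun r => r < p), s (swap r p') := by
    rw [jucysMurphy, hsplit, sum_insert (by simp)]
  have hconj : s (swap p p') * jucysMurphy s p
      = (∑ r ∈ univ.filter (fun r => r < p), s (swap r p')) * s (swap p p') := by
    rw [mul_jucysMurphy, Equiv.swap_apply_left]
    congr 1
    refine sum_congr rfl fun r hr => ?_
    have hrp : r < p := (mem_filter.1 hr).2
    rw [Equiv.swap_apply_of_ne_of_ne hrp.ne (hrp.trans hcov.lt).ne]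
  have hss : s (swap p p') * s (swap p p') = 1 := by
    rw [← map_mul, Equiv.swap_mul_self, map_one]
  rw [heckeX, heckeX, mul_add, hy, Equiv.swap_apply_left, hconj, hJ, add_mul, add_mul, hss]
  abel

end HeckeX

section HeckeLift

variable {A : Type*} [Ring A] [Algebra ℂ A] {N : ℕ} {s : Equiv.Perm (Fin N) →* A}
  {y : Fin N → A}

noncomputable def heckeLift (hy : IsPermEquivariant s y) (hyy : HasHeckeCommutators s y) :
    DAHA N →ₐ[ℂ] A :=
  RingQuot.liftAlgHom ℂ ⟨FreeAlgebra.lift ℂ (Sum.elim s (heckeX s y)), fun _ _ h => by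
    induction h with
    | group_one => simp
    | group_mul σ τ => simp
    | x_comm p q => simpa using (hy.heckeX_commute hyy p q).eq
    | cross1 p hp q h1 h2 =>
        have hcov : p ⋖ ⟨p + 1, hp⟩ := Fin.covBy_iff.2 (Order.covBy_add_one _)
        simpa using (hy.commute_heckeX_of_apply_eq (Equiv.swap_apply_of_ne_of_ne h1 h2)
          (swap_apply_lt_iff (by rw [← hcov.le_iff_lt_right, h2.symm.le_iff_lt]))).eq
    | cross2 p hp =>
        simpa using hy.swap_mul_heckeX_of_covBy (Fin.covBy_iff.2 (Order.covBy_add_one _))⟩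

variable (hy : IsPermEquivariant s y) (hyy : HasHeckeCommutators s y)

lemma heckeLift_dahaGroup (σ : Equiv.Perm (Fin N)) :
    heckeLift hy hyy (dahaGroup N σ) = s σ := by
  simp [heckeLift, dahaGroup]

lemma heckeLift_dahaY (p : Fin N) : heckeLift hy hyy (dahaY N p) = y p := by
  rw [dahaY, map_sub, map_sum]
  simp only [heckeLift_dahaGroup]
  simp [heckeLift, dahaX, heckeX, jucysMurphy]

lemma commute_heckeLift {z : A} (hs : ∀ σ, Commute (s σ) z) (hyz : ∀ p, Commute (y p) z)
    (d : DAHA N) : Commute (heckeLift hy hyy d) z := by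
  obtain ⟨x, rfl⟩ := RingQuot.mkAlgHom_surjective ℂ (HeckeRel N) d
  induction x using FreeAlgebra.induction with
  | grade0 r => simpa using Algebra.commute_algebraMap_left r z
  | grade1 i =>
      rcases i with σ | p
      · simpa [heckeLift] using hs σ
      · simpa [heckeLift, heckeX, jucysMurphy] using
          (hyz p).add_left (Commute.sum_left _ _ _ fun _ _ => hs _)
  | mul a b ha hb => simpa using ha.mul_left hb
  | add a b ha hb => simpa using ha.add_left hb

end HeckeLift

section GlAction

variable {m : ℕ}

def IsGlAction (ρ : Fin m → Fin m → Module.End ℂ V) : Prop :=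
  ∀ a b c d, ρ a b * ρ c d - ρ c d * ρ a b
    = (if b = c then ρ a d else 0) - (if d = a then ρ c b else 0)

variable {ρ : Fin m → Fin m → Module.End ℂ V}

lemma IsGlAction.apply (hρ : IsGlAction ρ) (a b c d : Fin m) (v : V) :
    ρ a b (ρ c d v) - ρ c d (ρ a b v)
      = (if b = c then ρ a d v else 0) - (if d = a then ρ c b v else 0) := by
  simpa [apply_ite (fun L : Module.End ℂ V => L v)] using congrArg (· v) (hρ a b c d)

lemma IsGlAction.sum_sub_sum_comm (hρ : IsGlAction ρ) (G : Fin m → Fin m → V) (i j : Fin m) :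
    ∑ b, ∑ c, ρ b i (ρ c j (G b c)) - ∑ c, ∑ b, ρ c j (ρ b i (G b c))
      = ∑ b, ρ b j (G b i) - ∑ c, ρ c i (G j c) := by
  calc _ = ∑ b, ∑ c, (ρ b i (ρ c j (G b c)) - ρ c j (ρ b i (G b c))) := by
        rw [sum_comm (s := univ) (t := univ) (f := fun c b => ρ c j (ρ b i (G b c)))]
        simp only [sum_sub_distrib]
    _ = _ := by
        simp only [hρ.apply, sum_sub_distrib, sum_ite_eq, mem_univ, if_true]
        rw [sum_comm]
        simp

lemma IsGlAction.sum_add_ite (hρ : IsGlAction ρ) (v : Fin m → V) (a b i : Fin m) :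
    ∑ c, ρ a b (ρ c i (v c)) + (if i = a then ∑ c, ρ c b (v c) else 0)
      = ∑ c, ρ c i (ρ a b (v c)) + ρ a i (v b) := by
  have hcomm : ∑ c, ρ a b (ρ c i (v c)) - ∑ c, ρ c i (ρ a b (v c))
      = ρ a i (v b) - if i = a then ∑ c, ρ c b (v c) else 0 := by
    rw [← sum_sub_distrib]
    simp only [hρ.apply, sum_sub_distrib, sum_ite_eq, mem_univ, if_true]
    split_ifs <;> simp
  rw [sub_eq_sub_iff_add_eq_add] at hcomm
  rw [hcomm, add_comm]

end GlAction

section TensorOperators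

variable {m N : ℕ} {ρ : Fin m → Fin m → Module.End ℂ V}

@[simp]
lemma permL_apply (σ : Equiv.Perm (Fin N)) (F : (Fin N → Fin m) → V) (h : Fin N → Fin m) :
    permL m N σ F h = F (h ∘ σ) := rfl

@[simp]
lemma yL_apply (p : Fin N) (F : (Fin N → Fin m) → V) (h : Fin N → Fin m) :
    yL m N ρ p F h = ∑ b, ρ b (h p) (F (Function.update h p b)) := rfl

noncomputable def permHom (m N : ℕ) :
    Equiv.Perm (Fin N) →* Module.End ℂ ((Fin N → Fin m) → V) where
  toFun := permL m N
  map_one' := rfl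
  map_mul' _ _ := rfl

@[simp]
lemma permHom_apply (σ : Equiv.Perm (Fin N)) : permHom (V := V) m N σ = permL m N σ := rfl

lemma isPermEquivariant_yL (ρ : Fin m → Fin m → Module.End ℂ V) :
    IsPermEquivariant (permHom m N) (yL m N ρ) := by
  intro σ p
  refine LinearMap.ext fun F => funext fun h => ?_
  simp [Function.update_comp_equiv]

lemma hasHeckeCommutators_yL (hρ : IsGlAction ρ) :
    HasHeckeCommutators (permHom m N) (yL m N ρ) := by
  intro p q hpq
  refine LinearMap.ext fun F => funext fun h => ?_
  have hp : ∀ b, Function.update (h ∘ swap p q) p b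
      = Function.update (Function.update h p b) q (h p) := by
    simp [Equiv.comp_swap_eq_update, Function.update_comm hpq]
  have hq : ∀ c, Function.update (h ∘ swap p q) q c
      = Function.update (Function.update h p (h q)) q c := by
    simp [Equiv.comp_swap_eq_update, Function.update_comm hpq]
  simpa [Function.update_of_ne hpq, Function.update_of_ne hpq.symm, Function.update_comm hpq.symm,
    hp, hq] using
    hρ.sum_sub_sum_comm (fun b c => F (Function.update (Function.update h p b) q c)) (h p) (h q)

noncomputable def matrixUnitL (a b : Fin m) (q : Fin N) :
    Module.End ℂ ((Fin N → Fin m) → V) where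
  toFun F h := if h q = a then F (Function.update h q b) else 0
  map_add' F G := by
    funext h
    dsimp only [Pi.add_apply]
    split_ifs <;> simp
  map_smul' c F := by
    funext h
    dsimp only [Pi.smul_apply]
    split_ifs <;> simp

@[simp]
lemma matrixUnitL_apply (a b : Fin m) (q : Fin N) (F : (Fin N → Fin m) → V)
    (h : Fin N → Fin m) :
    matrixUnitL a b q F h = if h q = a then F (Function.update h q b) else 0 := rfl

lemma glDiagL_eq_compLeft_add_sum (a b : Fin m) :
    glDiagL m N ρ a b
      = LinearMap.compLeft (ρ a b) (Fin N → Fin m) + ∑ q, matrixUnitL a b q := by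
  refine LinearMap.ext fun F => funext fun h => ?_
  simp [glDiagL]

lemma matrixUnitL_commute_yL (a b : Fin m) {p q : Fin N} (hqp : q ≠ p) :
    Commute (matrixUnitL a b q) (yL m N ρ p) := by
  refine LinearMap.ext fun F => funext fun h => ?_
  by_cases hqa : h q = a <;>
    simp [hqa, Function.update_of_ne hqp, Function.update_of_ne hqp.symm, Function.update_comm hqp]

lemma compLeft_add_matrixUnitL_commute_yL (hρ : IsGlAction ρ) (a b : Fin m) (p : Fin N) :
    Commute (LinearMap.compLeft (ρ a b) (Fin N → Fin m) + matrixUnitL a b p) (yL m N ρ p) := by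
  refine LinearMap.ext fun F => funext fun h => ?_
  simpa [sum_add_distrib, apply_ite (ρ _ (h p))]
    using hρ.sum_add_ite (fun c => F (Function.update h p c)) a b (h p)

lemma yL_commute_glDiagL (hρ : IsGlAction ρ) (p : Fin N) (a b : Fin m) :
    Commute (yL m N ρ p) (glDiagL m N ρ a b) := by
  rw [glDiagL_eq_compLeft_add_sum, ← add_sum_erase _ _ (mem_univ p), ← add_assoc]
  exact (compLeft_add_matrixUnitL_commute_yL hρ a b p).symm.add_right
    (Commute.sum_right _ _ _ fun q hq => (matrixUnitL_commute_yL a b (ne_of_mem_erase hq)).symm)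

lemma permL_commute_glDiagL (σ : Equiv.Perm (Fin N)) (a b : Fin m) :
    Commute (permL m N σ) (glDiagL m N ρ a b) := by
  refine LinearMap.ext fun F => funext fun h => ?_
  simpa [glDiagL, Function.update_comp_equiv] using
    (Equiv.sum_comp σ fun q => if h q = a then F (Function.update (h ∘ σ) (σ.symm q) b) else 0)

end TensorOperators

/-- Proposition 1.1, Cherednik:  for a `gl_m`-module `V`
(the action of matrix units `E_{ab}` being `ρ a b`), there is an action of
the degenerate affine Hecke algebra `H_N` on `V ⊗ (ℂ^m)^{⊗N}` in which
`S_N ⊂ H_N` acts by permuting the `N` tensor factors `ℂ^m` and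
`y_p` acts as `Σ_{a,b} E_{ba} ⊗ E_{ab}^{(p)}`; moreover this action commutes
with the diagonal action of `gl_m`. -/
theorem cherednik_action (m N : ℕ) (ρ : Fin m → Fin m → Module.End ℂ V)
    (hρ : ∀ a b c d : Fin m,
      ρ a b * ρ c d - ρ c d * ρ a b
        = (if b = c then ρ a d else 0) - (if d = a then ρ c b else 0)) :
    ∃ φ : DAHA N →ₐ[ℂ] Module.End ℂ ((Fin N → Fin m) → V),
      (∀ σ : Equiv.Perm (Fin N), φ (dahaGroup N σ) = permL m N σ) ∧
      (∀ p : Fin N, φ (dahaY N p) = yL m N ρ p) ∧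
      (∀ (d : DAHA N) (a b : Fin m), Commute (φ d) (glDiagL m N ρ a b)) := by
  have hy := isPermEquivariant_yL (N := N) ρ
  have hyy := hasHeckeCommutators_yL (N := N) hρ
  exact ⟨heckeLift hy hyy, heckeLift_dahaGroup hy hyy, heckeLift_dahaY hy hyy,
    fun d a b => commute_heckeLift hy hyy (fun σ => permL_commute_glDiagL σ a b)
      (fun p => yL_commute_glDiagL hρ p a b) d⟩
end

section
/- In the tensor product algebra U(gl_m) ⊗ GD(C^m ⊗ C^n), for each s ≥ 0 and i,j ∈ {1,...,n} define T_{ij}^{(s+1)} = Σ_{c_0,...,c_s=1}^m E_{c_1 c_0} E_{c_2 c_1} ··· E_{c_s c_{s−1}} ⊗ x_{c_0 i} ∂_{c_s j} (with first factor 1 when s = 0). Then each T_{ij}^{(s+1)} commutes with every element Ê_{ab} := E_{ab} ⊗ 1 + Σ_{k=1}^n 1 ⊗ x_{ak} ∂_{bk} for a,b = 1,...,m. -/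
/-!
Let `N = Eᵀ`, the matrix over `U(gl_m)` with `N_{uv} = E_{vu}`. Summing the first tensor factor of
`T_{ij}^{(s+1)}` over the paths from `c_0 = u` to `c_s = v` gives `(N ^ s)_{uv}`, so
`T_{ij}^{(s+1)} = Σ_{u,v} (N ^ s)_{uv} ⊗ x_{ui} ∂_{vj}`.
The relation `[X_{uv}, E_{ab}] = δ_{ua} X_{bv} - δ_{vb} X_{ua}` says that `X` commutes with
`diagonal E_{ab} + e_{ab}` in the matrix ring, so it passes from `N` to `N ^ s`. The Clifford
relations give the contragredient rule for `x_{ui} ∂_{vj}` under `Σ_k x_{ak} ∂_{bk}`, and in the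
contraction `Σ_{u,v} P_{uv} ⊗ Q_{uv}` the two contributions of `Ê_{ab}` cancel.
-/

open scoped TensorProduct
open Finset Matrix Algebra.TensorProduct

namespace Matrix

variable {ι R : Type*} [Fintype ι] [DecidableEq ι]

theorem pow_apply_eq_sum_paths [Semiring R] (N : Matrix ι ι R) (s : ℕ) (u v : ι) :
    (N ^ s) u v = ∑ c : Fin (s + 1) → ι,
      if c 0 = u ∧ c (Fin.last s) = v then
        (List.ofFn fun r : Fin s => N (c r.castSucc) (c r.succ)).prod
      else 0 := by
  induction s generalizing u with
  | zero =>
    rw [pow_zero, Fintype.sum_equiv (Equiv.funUnique (Fin 1) ι) _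
      (fun w => if w = u ∧ w = v then 1 else 0) (fun c => by simp)]
    by_cases h : u = v
    · subst h; simp
    · simp only [one_apply, h, if_false]
      exact (sum_eq_zero fun w _ => if_neg fun hw => h (hw.1.symm.trans hw.2)).symm
  | succ s ih =>
    rw [← Fintype.sum_equiv (Fin.consEquiv fun _ => ι) (fun p => _) _ (fun _ => rfl),
      Fintype.sum_prod_type, pow_succ', mul_apply]
    simp only [ih, mul_sum, mul_ite, mul_zero, Fin.consEquiv, Equiv.coe_fn_mk, Fin.cons_zero,
      ← Fin.succ_last, Fin.cons_succ, List.ofFn_succ, List.prod_cons, Fin.castSucc_zero]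
    rw [sum_comm]
    simp [ite_and]

theorem single_one_mul_apply [Semiring R] (X : Matrix ι ι R) (a b u v : ι) :
    ((single a b 1 : Matrix ι ι R) * X) u v = if u = a then X b v else 0 := by
  split_ifs with h
  · subst h; simp
  · exact single_mul_apply_of_ne _ _ _ _ _ h _

theorem mul_single_one_apply [Semiring R] (X : Matrix ι ι R) (a b u v : ι) :
    (X * (single a b 1 : Matrix ι ι R)) u v = if v = b then X u a else 0 := by
  split_ifs with h
  · subst h; simp
  · exact mul_single_apply_of_ne _ _ _ _ _ h _

/-- Entrywise, `ad e` is the commutator with the scalar matrix `diagonal e`. -/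
theorem commute_diagonal_add_single_iff [Ring R] (X : Matrix ι ι R) (e : R) (a b : ι) :
    Commute X (diagonal (fun _ => e) + single a b 1) ↔
      ∀ u v, X u v * e - e * X u v
        = (if u = a then X b v else 0) - (if v = b then X u a else 0) := by
  rw [commute_iff_eq, ← sub_eq_zero, ← Matrix.ext_iff]
  simp only [Matrix.sub_apply, mul_add, add_mul, Matrix.add_apply, mul_diagonal, diagonal_mul,
    single_one_mul_apply, mul_single_one_apply, Matrix.zero_apply]
  refine forall₂_congr fun u v => ?_
  rw [← sub_eq_zero (b := _ - _)]
  exact Iff.of_eq (congrArg (· = 0) (by abel))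

end Matrix

theorem sum_tmul_pow_apply {ι S A B : Type*} [Fintype ι] [DecidableEq ι] [CommSemiring S]
    [Semiring A] [Algebra S A] [AddCommMonoid B] [Module S B]
    (N : Matrix ι ι A) (Q : ι → ι → B) (s : ℕ) :
    (∑ u, ∑ v, (N ^ s) u v ⊗ₜ[S] Q u v : A ⊗[S] B)
      = ∑ c : Fin (s + 1) → ι,
          (List.ofFn fun r : Fin s => N (c r.castSucc) (c r.succ)).prod
            ⊗ₜ[S] Q (c 0) (c (Fin.last s)) := by
  simp only [pow_apply_eq_sum_paths, TensorProduct.sum_tmul, ite_and, TensorProduct.ite_tmul]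
  conv_lhs => enter [2, u]; rw [sum_comm]
  rw [sum_comm]
  simp

theorem commute_sum_mul_of_commutator {ι R : Type*} [Fintype ι] [DecidableEq ι] [Ring R]
    (P Q : ι → ι → R) (e f : R) (a b : ι)
    (hP : ∀ u v, P u v * e - e * P u v
      = (if u = a then P b v else 0) - (if v = b then P u a else 0))
    (hQ : ∀ u v, Q u v * f - f * Q u v
      = (if v = a then Q u b else 0) - (if u = b then Q a v else 0))
    (hPf : ∀ u v, Commute (P u v) f) (hQe : ∀ u v, Commute (Q u v) e) :
    Commute (∑ u, ∑ v, P u v * Q u v) (e + f) := by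
  have hPQ : ∀ u v, P u v * Q u v * (e + f) - (e + f) * (P u v * Q u v)
      = (P u v * e - e * P u v) * Q u v + P u v * (Q u v * f - f * Q u v) := by
    intro u v
    have expand : P u v * Q u v * (e + f) - (e + f) * (P u v * Q u v)
        = (P u v * e - e * P u v) * Q u v + P u v * (Q u v * f - f * Q u v)
          + (P u v * (Q u v * e - e * Q u v) + (P u v * f - f * P u v) * Q u v) := by
      noncomm_ring
    rw [expand, (hQe u v).eq, (hPf u v).eq, sub_self, sub_self, mul_zero, zero_mul, add_zero,
      add_zero]
  rw [commute_iff_eq, ← sub_eq_zero]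
  calc (∑ u, ∑ v, P u v * Q u v) * (e + f) - (e + f) * ∑ u, ∑ v, P u v * Q u v
      = ∑ u, ∑ v, ((P u v * e - e * P u v) * Q u v + P u v * (Q u v * f - f * Q u v)) := by
        simp only [sum_mul, mul_sum, ← hPQ, sum_sub_distrib]
    _ = 0 := by
        simp only [hP, hQ, sub_mul, mul_sub, ite_mul, mul_ite, zero_mul, mul_zero, sum_add_distrib,
          sum_sub_distrib, sum_ite_irrel, sum_const_zero, sum_ite_eq', mem_univ, if_true]
        abel

theorem commute_sum_tmul_of_commutator {ι S A B : Type*} [Fintype ι] [DecidableEq ι]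
    [CommSemiring S] [Ring A] [Ring B] [Algebra S A] [Algebra S B]
    (P : ι → ι → A) (Q : ι → ι → B) (e : A) (f : B) (a b : ι)
    (hP : ∀ u v, P u v * e - e * P u v
      = (if u = a then P b v else 0) - (if v = b then P u a else 0))
    (hQ : ∀ u v, Q u v * f - f * Q u v
      = (if v = a then Q u b else 0) - (if u = b then Q a v else 0)) :
    Commute (∑ u, ∑ v, P u v ⊗ₜ[S] Q u v) (e ⊗ₜ[S] 1 + 1 ⊗ₜ[S] f) := by
  have h := commute_sum_mul_of_commutator (fun u v => P u v ⊗ₜ[S] (1 : B))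
    (fun u v => (1 : A) ⊗ₜ[S] Q u v) (e ⊗ₜ[S] 1) (1 ⊗ₜ[S] f) a b
    (fun u v => by
      rw [tmul_mul_tmul, tmul_mul_tmul, mul_one, ← TensorProduct.sub_tmul, hP]
      simp only [TensorProduct.sub_tmul, TensorProduct.ite_tmul])
    (fun u v => by
      rw [tmul_mul_tmul, tmul_mul_tmul, mul_one, ← TensorProduct.tmul_sub, hQ]
      simp only [TensorProduct.tmul_sub, TensorProduct.tmul_ite])
    (fun u v => (Commute.one_right _).tmul (Commute.one_left _))
    (fun u v => (Commute.one_left _).tmul (Commute.one_right _))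
  simpa only [tmul_mul_tmul, mul_one, one_mul] using h

theorem commutator_mul_mul_of_anticommutators {R : Type*} [Ring R] {A B C D α β : R}
    (hBC : B * C + C * B = β) (hBD : B * D + D * B = 0) (hAC : A * C + C * A = 0)
    (hAD : A * D + D * A = α) :
    A * B * (C * D) - C * D * (A * B) = A * β * D - C * α * B := by
  have expand : A * B * (C * D) - C * D * (A * B)
      = A * (B * C + C * B) * D - A * C * (B * D + D * B)
        + (A * C + C * A) * D * B - C * (A * D + D * A) * B := by
    noncomm_ring
  rw [expand, hBC, hBD, hAC, hAD]
  noncomm_ring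

theorem commutator_clifford_bilinear {R ι κ : Type*} [Ring R] [DecidableEq ι] [Fintype κ]
    [DecidableEq κ] (x dd : ι → κ → R)
    (hxx : ∀ a b i j, x a i * x b j = -(x b j * x a i))
    (hdd : ∀ a b i j, dd a i * dd b j = -(dd b j * dd a i))
    (hxd : ∀ a b i j, x a i * dd b j + dd b j * x a i = if a = b ∧ i = j then 1 else 0)
    (u v a b : ι) (i j : κ) :
    x u i * dd v j * ∑ k, x a k * dd b k - (∑ k, x a k * dd b k) * (x u i * dd v j)
      = (if v = a then x u i * dd b j else 0) - (if u = b then x a i * dd v j else 0) := by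
  have hk : ∀ k, x u i * dd v j * (x a k * dd b k) - x a k * dd b k * (x u i * dd v j)
      = (if a = v ∧ k = j then x u i * dd b k else 0)
        - (if u = b ∧ i = k then x a k * dd v j else 0) := fun k => by
    rw [commutator_mul_mul_of_anticommutators ((add_comm _ _).trans (hxd a v k j))
      (eq_neg_iff_add_eq_zero.mp (hdd v b j k)) (eq_neg_iff_add_eq_zero.mp (hxx u a i k))
      (hxd u b i k)]
    simp only [mul_ite, ite_mul, mul_one, mul_zero, zero_mul]
  rw [mul_sum, sum_mul, ← sum_sub_distrib]
  simp only [hk, sum_sub_distrib, ite_and, sum_ite_irrel, sum_const_zero, sum_ite_eq', mem_univ,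
    if_true, eq_comm (a := a), eq_comm (a := i)]

/-- in `U(gl_m) ⊗ GD(ℂ^m ⊗ ℂ^n)` (modelled by the tensor
product of a ℂ-algebra `A₁` with `gl_m`-generators `E a b` and a ℂ-algebra
`A₂` with Clifford generators `x`, `∂`), the elements
`T_{ij}^{(s+1)} = Σ_{c_0,…,c_s} E_{c_1 c_0} ⋯ E_{c_s c_{s-1}} ⊗ x_{c_0 i} ∂_{c_s j}`
commute with every `Ê_{ab} = E_{ab} ⊗ 1 + Σ_k 1 ⊗ x_{ak} ∂_{bk}`. -/
theorem yangian_generators_commute_with_diagonal_gl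
    {A₁ A₂ : Type*} [Ring A₁] [Algebra ℂ A₁] [Ring A₂] [Algebra ℂ A₂]
    (m n : ℕ)
    (E : Fin m → Fin m → A₁)
    (hE : ∀ a b c d : Fin m,
      E a b * E c d - E c d * E a b
        = (if b = c then E a d else 0) - (if d = a then E c b else 0))
    (x dd : Fin m → Fin n → A₂)
    (hxx : ∀ (a b : Fin m) (i j : Fin n), x a i * x b j = -(x b j * x a i))
    (hdd : ∀ (a b : Fin m) (i j : Fin n), dd a i * dd b j = -(dd b j * dd a i))
    (hxd : ∀ (a b : Fin m) (i j : Fin n),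
      x a i * dd b j + dd b j * x a i = if a = b ∧ i = j then 1 else 0) :
    ∀ (s : ℕ) (i j : Fin n) (a b : Fin m),
      Commute
        (∑ c : Fin (s + 1) → Fin m,
          ((List.ofFn fun r : Fin s => E (c r.succ) (c r.castSucc)).prod)
            ⊗ₜ[ℂ] (x (c 0) i * dd (c (Fin.last s)) j))
        (E a b ⊗ₜ[ℂ] (1 : A₂) +
          ∑ k : Fin n, (1 : A₁) ⊗ₜ[ℂ] (x a k * dd b k)) := by
  intro s i j a b
  have hN : Commute (of E)ᵀ (diagonal (fun _ => E a b) + single a b 1) :=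
    (commute_diagonal_add_single_iff _ _ _ _).2 fun u v => by
      simpa only [transpose_apply, of_apply, eq_comm (a := b)] using hE v u a b
  have key := commute_sum_tmul_of_commutator (S := ℂ) (fun u v => ((of E)ᵀ ^ s) u v)
    (fun u v => x u i * dd v j) (E a b) (∑ k, x a k * dd b k) a b
    ((commute_diagonal_add_single_iff _ _ _ _).1 (hN.pow_left s))
    (commutator_clifford_bilinear x dd hxx hdd hxd · · a b i j)
  rwa [sum_tmul_pow_apply, TensorProduct.tmul_sum] at key
end

section
/- Let A be an associative algebra containing U(sl_2) with standard generators E, F, H ([H,E] = 2E, [H,F] = −2F, [E,F] = H), localized so that (H − k) is invertible for all integers k. For Y ∈ A define ξ(Y) = Σ_{s≥0} (s! H(H−1)···(H−s+1))^{−1} E^s (ad F)^s (Y), assuming the sum is finite (Y is ad-F-nilpotent). Let J̄ be the right ideal generated by F. Then for any X in the Cartan part (a polynomial in H) and any Y, one has ξ(XY) ∈ θ(X) ξ(Y) + J̄ and ξ(YX) ∈ ξ(Y) θ(X) + J̄, where θ is the shift H ↦ H + 2. -/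
/-!
Write `ξ(Z) = ∑ₛ uₛ(Z) / s!` with `uₛ(Z) = Qₛ Eˢ (ad F)ˢ Z` and `Qₛ = (H (H-1) ⋯ (H-s+1))⁻¹`.
Since `ad F (H Z) = H · ad F (Z) + 2 F Z`, the term `u_{s+1}(H Z)` contains `Q_{s+1} E^{s+1} F`;
moving `F` to the left through `E^{s+1}` costs `(s+1)(H-s) Eˢ`, whose factor `H - s` cancels the
last inverse in `Q_{s+1}`, while `Q_{s+1} F ∈ F A`. Hence modulo `F A`
`u_{s+1}(H Z) ≡ (H - 2(s+1)) u_{s+1}(Z) + 2(s+1)² uₛ(Z)`, and after weighting by `1/s!` the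
correction terms telescope to `ξ(H Z) ≡ (H + 2) ξ(Z)`. Multiplication by `H` on the right is
handled the same way, using `W F = F W - ad F (W)`. As `(H + 2) F = F H`, left multiplication by
`H + 2` preserves `F A`, so the identity passes to powers of `H` and, by linearity, to `p(H)`,
once the truncation order is large enough that no term of `ξ` is cut off.
-/

open Finset Polynomial Filter
open scoped Nat

namespace Zhelobenko

variable {A : Type*} [Ring A]

/-- `(H (H - 1) ⋯ (H - s + 1))⁻¹` when `Hinv k = (H - k)⁻¹`. -/
def invFallingProd (Hinv : ℤ → A) (s : ℕ) : A :=
  (List.ofFn fun r : Fin s => Hinv ((r : ℕ) : ℤ)).prod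

section Inverses
variable {F H : A} {Hinv : ℤ → A}

@[simp]
theorem invFallingProd_zero : invFallingProd Hinv 0 = 1 := by simp [invFallingProd]

theorem invFallingProd_succ (s : ℕ) :
    invFallingProd Hinv (s + 1) = invFallingProd Hinv s * Hinv s := by
  rw [invFallingProd, invFallingProd, List.ofFn_succ', List.prod_concat]; rfl

theorem commute_Hinv_H (hHinv : ∀ k : ℤ, (H - k) * Hinv k = 1 ∧ Hinv k * (H - k) = 1) (k : ℤ) :
    Commute (Hinv k) H := by
  have h : Commute (Hinv k) (H - k) := (hHinv k).2.trans (hHinv k).1.symm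
  simpa using h.add_right (Int.cast_commute k (Hinv k)).symm

theorem commute_invFallingProd_H
    (hHinv : ∀ k : ℤ, (H - k) * Hinv k = 1 ∧ Hinv k * (H - k) = 1) (s : ℕ) :
    Commute (invFallingProd Hinv s) H := by
  refine Commute.list_prod_left _ _ fun x hx => ?_
  obtain ⟨r, rfl⟩ := List.mem_ofFn.1 hx
  exact commute_Hinv_H hHinv _

theorem F_mul_H (hHF : H * F - F * H = -(2 * F)) : F * H = (H + 2) * F := by
  rw [add_mul, ← sub_eq_iff_eq_add', ← neg_sub, hHF, neg_neg]

theorem Hinv_mul_F (hHF : H * F - F * H = -(2 * F))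
    (hHinv : ∀ k : ℤ, (H - k) * Hinv k = 1 ∧ Hinv k * (H - k) = 1) (k : ℤ) :
    Hinv k * F = F * Hinv (k + 2) := by
  have hF : F * (H - ↑(k + 2)) = (H - k) * F := by
    rw [mul_sub, F_mul_H hHF, ← (Int.cast_commute (k + 2) F).eq, ← sub_mul]
    push_cast
    rw [add_sub_add_right_eq_sub]
  calc Hinv k * F = Hinv k * F * ((H - ↑(k + 2)) * Hinv (k + 2)) := by
        rw [(hHinv _).1, mul_one]
    _ = Hinv k * (H - k) * F * Hinv (k + 2) := by
        rw [← mul_assoc, mul_assoc _ F, hF]; simp only [mul_assoc]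
    _ = F * Hinv (k + 2) := by rw [(hHinv k).2, one_mul]

theorem invFallingProd_mul_F (hHF : H * F - F * H = -(2 * F))
    (hHinv : ∀ k : ℤ, (H - k) * Hinv k = 1 ∧ Hinv k * (H - k) = 1) (s : ℕ) :
    invFallingProd Hinv s * F = F * invFallingProd (fun k => Hinv (k + 2)) s := by
  induction s with
  | zero => simp
  | succ s ih =>
    rw [invFallingProd_succ, invFallingProd_succ, mul_assoc, Hinv_mul_F hHF hHinv, ← mul_assoc,
      ih, mul_assoc]

theorem invFallingProd_succ_mul [Algebra ℚ A]
    (hHinv : ∀ k : ℤ, (H - k) * Hinv k = 1 ∧ Hinv k * (H - k) = 1) (s : ℕ) (x : A) :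
    invFallingProd Hinv (s + 1) * (H * x - (s : ℚ) • x) = invFallingProd Hinv s * x := by
  have h := (hHinv s).2
  rw [Int.cast_natCast] at h
  rw [invFallingProd_succ, Nat.cast_smul_eq_nsmul, nsmul_eq_mul, ← sub_mul, mul_assoc,
    ← mul_assoc (Hinv s), h, one_mul]

end Inverses

variable [Algebra ℚ A]

def rightIdeal (F : A) : Submodule ℚ A := LinearMap.range (LinearMap.mulLeft ℚ F)

section RightIdeal
variable {F : A}

theorem mul_add_smodEq_rightIdeal (a y : A) : F * a + y ≡ y [SMOD rightIdeal F] :=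
  SModEq.sub_mem.2 ⟨a, by rw [LinearMap.mulLeft_apply, add_sub_cancel_right]⟩

theorem exists_eq_add_mul_of_smodEq {x y : A} (h : x ≡ y [SMOD rightIdeal F]) :
    ∃ a, x = y + F * a := by
  obtain ⟨a, ha⟩ := SModEq.sub_mem.1 h
  exact ⟨a, by rw [LinearMap.mulLeft_apply] at ha; rw [ha, add_sub_cancel]⟩

theorem smodEq_rightIdeal_mul_right {x y : A} (h : x ≡ y [SMOD rightIdeal F]) (c : A) :
    x * c ≡ y * c [SMOD rightIdeal F] := by
  obtain ⟨a, ha⟩ := SModEq.sub_mem.1 h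
  refine SModEq.sub_mem.2 ⟨a * c, ?_⟩
  rw [LinearMap.mulLeft_apply] at ha ⊢
  rw [← sub_mul, ← ha, mul_assoc]

theorem smodEq_rightIdeal_mul_left {c d x y : A} (hc : c * F = F * d)
    (h : x ≡ y [SMOD rightIdeal F]) : c * x ≡ c * y [SMOD rightIdeal F] := by
  obtain ⟨a, ha⟩ := SModEq.sub_mem.1 h
  refine SModEq.sub_mem.2 ⟨d * a, ?_⟩
  rw [LinearMap.mulLeft_apply] at ha ⊢
  rw [← mul_sub, ← ha, ← mul_assoc, ← mul_assoc, hc]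

end RightIdeal

section Relations
variable {E F H : A}

theorem E_mul_H (hHE : H * E - E * H = 2 * E) : E * H = H * E - (2 : ℚ) • E := by
  rw [two_smul, ← two_mul, ← hHE]; abel

theorem pow_mul_H (hHE : H * E - E * H = 2 * E) (n : ℕ) :
    E ^ n * H = H * E ^ n - (2 * n : ℚ) • E ^ n := by
  induction n with
  | zero => simp
  | succ n ih =>
    rw [pow_succ, mul_assoc, E_mul_H hHE, mul_sub, ← mul_assoc, ih, sub_mul, mul_assoc H,
      mul_smul_comm, smul_mul_assoc, ← pow_succ]
    push_cast
    module

theorem pow_succ_mul_F (hHE : H * E - E * H = 2 * E) (hEF : E * F - F * E = H) (n : ℕ) :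
    E ^ (n + 1) * F = F * E ^ (n + 1) + ((n : ℚ) + 1) • (H * E ^ n - (n : ℚ) • E ^ n) := by
  have hEF' : E * F = F * E + H := by rw [← hEF]; abel
  induction n with
  | zero => simp [hEF']
  | succ n ih =>
    rw [pow_succ', mul_assoc, ih, mul_add, ← mul_assoc, hEF', mul_smul_comm, mul_sub,
      ← mul_assoc E H, E_mul_H hHE, mul_smul_comm, add_mul, mul_assoc, ← pow_succ',
      sub_mul, mul_assoc, ← pow_succ', smul_mul_assoc, ← pow_succ']
    push_cast
    module

end Relations

def ad (F : A) : Module.End ℚ A := LinearMap.mulLeft ℚ F - LinearMap.mulRight ℚ F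

section Ad
variable {F H : A}

@[simp]
theorem ad_apply (Z : A) : ad F Z = F * Z - Z * F := rfl

theorem ad_F_mul (W : A) : ad F (F * W) = F * ad F W := by
  simp only [ad_apply]; noncomm_ring

theorem ad_mul_F (W : A) : ad F (W * F) = ad F W * F := by
  simp only [ad_apply]; noncomm_ring

theorem ad_H_mul (hHF : H * F - F * H = -(2 * F)) (W : A) :
    ad F (H * W) = H * ad F W + (2 : ℚ) • (F * W) := by
  simp only [ad_apply]
  rw [← mul_assoc, F_mul_H hHF, two_smul]; noncomm_ring

theorem ad_mul_H (hHF : H * F - F * H = -(2 * F)) (W : A) :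
    ad F (W * H) = ad F W * H + (2 : ℚ) • (W * F) := by
  have hHF' : H * F = F * H - 2 * F := by rw [F_mul_H hHF]; noncomm_ring
  simp only [ad_apply]
  rw [mul_assoc W, hHF', two_smul]; noncomm_ring

theorem ad_pow_succ_H_mul (hHF : H * F - F * H = -(2 * F)) (n : ℕ) (Z : A) :
    (ad F ^ (n + 1)) (H * Z)
      = H * (ad F ^ (n + 1)) Z + (2 * (n + 1) : ℚ) • (F * (ad F ^ n) Z) := by
  induction n with
  | zero => simpa using ad_H_mul hHF Z
  | succ n ih =>
    rw [pow_succ', Module.End.mul_apply, ih, map_add, map_smul, ad_H_mul hHF, ad_F_mul]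
    simp only [← Module.End.mul_apply, ← pow_succ']
    push_cast
    module

theorem ad_pow_succ_mul_H (hHF : H * F - F * H = -(2 * F)) (n : ℕ) (Z : A) :
    (ad F ^ (n + 1)) (Z * H)
      = (ad F ^ (n + 1)) Z * H + (2 * (n + 1) : ℚ) • ((ad F ^ n) Z * F) := by
  induction n with
  | zero => simpa using ad_mul_H hHF Z
  | succ n ih =>
    rw [pow_succ', Module.End.mul_apply, ih, map_add, map_smul, ad_mul_H hHF, ad_mul_F]
    simp only [← Module.End.mul_apply, ← pow_succ']
    push_cast
    module

theorem ad_pow_H_pow_mul_eq_zero (hHF : H * F - F * H = -(2 * F)) {N : ℕ} {Z : A}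
    (hZ : (ad F ^ N) Z = 0) (n : ℕ) : (ad F ^ (N + n)) (H ^ n * Z) = 0 := by
  induction n with
  | zero => simpa using hZ
  | succ n ih =>
    rw [← add_assoc, pow_succ' H, mul_assoc, ad_pow_succ_H_mul hHF, ih,
      Module.End.pow_map_zero_of_le (N + n).le_succ ih]
    simp

theorem ad_pow_mul_H_pow_eq_zero (hHF : H * F - F * H = -(2 * F)) {N : ℕ} {Z : A}
    (hZ : (ad F ^ N) Z = 0) (n : ℕ) : (ad F ^ (N + n)) (Z * H ^ n) = 0 := by
  induction n with
  | zero => simpa using hZ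
  | succ n ih =>
    rw [← add_assoc, pow_succ H, ← mul_assoc, ad_pow_succ_mul_H hHF, ih,
      Module.End.pow_map_zero_of_le (N + n).le_succ ih]
    simp

end Ad

theorem sum_range_factorial_shift {V : Type*} [AddCommGroup V] [Module ℚ V]
    (L : V →ₗ[ℚ] V) (u : ℕ → V) (n : ℕ) :
    L (u 0) + ∑ s ∈ range n, ((s + 1)! : ℚ)⁻¹ •
        (L (u (s + 1)) - (2 * (s + 1) : ℚ) • u (s + 1) + (2 * (s + 1) ^ 2 : ℚ) • u s)
      = L (∑ s ∈ range (n + 1), (s ! : ℚ)⁻¹ • u s)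
        + (2 : ℚ) • ∑ s ∈ range (n + 1), (s ! : ℚ)⁻¹ • u s - (2 * (n + 1) / n ! : ℚ) • u n := by
  induction n with
  | zero => simp
  | succ n ih =>
    rw [sum_range_succ, ← add_assoc, ih, sum_range_succ _ (n + 1)]
    simp only [map_add, map_smul, smul_add, smul_sub, smul_smul]
    rw [Nat.factorial_succ]
    push_cast
    match_scalars <;> field_simp <;> ring

theorem sum_range_factorial_smodEq {V : Type*} [AddCommGroup V] [Module ℚ V]
    (J : Submodule ℚ V) (L : V →ₗ[ℚ] V) {u w : ℕ → V} {n : ℕ} (h0 : w 0 = L (u 0))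
    (hsucc : ∀ s, w (s + 1)
      ≡ L (u (s + 1)) - (2 * (s + 1) : ℚ) • u (s + 1) + (2 * (s + 1) ^ 2 : ℚ) • u s [SMOD J])
    (hn : u n = 0) :
    ∑ s ∈ range (n + 1), (s ! : ℚ)⁻¹ • w s
      ≡ L (∑ s ∈ range (n + 1), (s ! : ℚ)⁻¹ • u s)
        + (2 : ℚ) • ∑ s ∈ range (n + 1), (s ! : ℚ)⁻¹ • u s [SMOD J] := by
  have h := sum_range_factorial_shift L u n
  rw [hn, smul_zero, sub_zero] at h
  rw [← h, sum_range_succ', add_comm, h0, Nat.factorial_zero, Nat.cast_one, inv_one, one_smul]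
  exact SModEq.rfl.add (SModEq.sum fun s _ => (hsucc s).smul _)

def xiTerm (E F : A) (Hinv : ℤ → A) (s : ℕ) (Z : A) : A :=
  invFallingProd Hinv s * E ^ s * (ad F ^ s) Z

def xi (E F : A) (Hinv : ℤ → A) (M : ℕ) : Module.End ℚ A :=
  ∑ s ∈ range (M + 1),
    (s ! : ℚ)⁻¹ • (LinearMap.mulLeft ℚ (invFallingProd Hinv s * E ^ s) * ad F ^ s)

section Xi
variable {E F H : A} {Hinv : ℤ → A}

theorem xi_apply (M : ℕ) (Z : A) :
    xi E F Hinv M Z = ∑ s ∈ range (M + 1), (s ! : ℚ)⁻¹ • xiTerm E F Hinv s Z := by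
  simp [xi, xiTerm, LinearMap.sum_apply, mul_assoc]

theorem xi_eq_of_le {M K : ℕ} {Z : A} (hZ : (ad F ^ (M + 1)) Z = 0) (hMK : M ≤ K) :
    xi E F Hinv K Z = xi E F Hinv M Z := by
  rw [xi_apply, xi_apply]
  refine (sum_subset (range_subset_range.2 (by omega)) fun s _ hs => ?_).symm
  rw [xiTerm, Module.End.pow_map_zero_of_le (by simpa using hs) hZ, mul_zero, smul_zero]

theorem invFallingProd_mul_pow_mul_F_smodEq (hHE : H * E - E * H = 2 * E)
    (hHF : H * F - F * H = -(2 * F)) (hEF : E * F - F * E = H)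
    (hHinv : ∀ k : ℤ, (H - k) * Hinv k = 1 ∧ Hinv k * (H - k) = 1) (s : ℕ) (W : A) :
    invFallingProd Hinv (s + 1) * E ^ (s + 1) * (F * W)
      ≡ ((s : ℚ) + 1) • (invFallingProd Hinv s * E ^ s * W) [SMOD rightIdeal F] := by
  have h : invFallingProd Hinv (s + 1) * E ^ (s + 1) * (F * W)
      = F * (invFallingProd (fun k => Hinv (k + 2)) (s + 1) * E ^ (s + 1) * W)
        + ((s : ℚ) + 1) • (invFallingProd Hinv s * E ^ s * W) := by
    rw [mul_assoc, ← mul_assoc _ F, pow_succ_mul_F hHE hEF, add_mul, mul_add, smul_mul_assoc,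
      mul_smul_comm, sub_mul, smul_mul_assoc, mul_assoc H, invFallingProd_succ_mul hHinv]
    simp only [← mul_assoc, invFallingProd_mul_F hHF hHinv]
  rw [h]
  exact mul_add_smodEq_rightIdeal _ _

theorem xiTerm_succ_H_mul_smodEq (hHE : H * E - E * H = 2 * E)
    (hHF : H * F - F * H = -(2 * F)) (hEF : E * F - F * E = H)
    (hHinv : ∀ k : ℤ, (H - k) * Hinv k = 1 ∧ Hinv k * (H - k) = 1) (s : ℕ) (Z : A) :
    xiTerm E F Hinv (s + 1) (H * Z)
      ≡ H * xiTerm E F Hinv (s + 1) Z - (2 * (s + 1) : ℚ) • xiTerm E F Hinv (s + 1) Z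
        + (2 * (s + 1) ^ 2 : ℚ) • xiTerm E F Hinv s Z [SMOD rightIdeal F] := by
  have h : xiTerm E F Hinv (s + 1) (H * Z)
      = H * xiTerm E F Hinv (s + 1) Z - (2 * (s + 1) : ℚ) • xiTerm E F Hinv (s + 1) Z
        + (2 * (s + 1) : ℚ) • (invFallingProd Hinv (s + 1) * E ^ (s + 1) * (F * (ad F ^ s) Z)) := by
    rw [xiTerm, xiTerm, ad_pow_succ_H_mul hHF, mul_add, mul_smul_comm, mul_assoc _ (E ^ (s + 1)),
      ← mul_assoc (E ^ (s + 1)), pow_mul_H hHE, sub_mul, mul_sub, mul_assoc H, ← mul_assoc _ H,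
      (commute_invFallingProd_H hHinv _).eq, smul_mul_assoc, mul_smul_comm]
    push_cast
    simp only [mul_assoc]
  calc _ = _ := h
    _ ≡ H * xiTerm E F Hinv (s + 1) Z - (2 * (s + 1) : ℚ) • xiTerm E F Hinv (s + 1) Z
        + (2 * (s + 1) : ℚ) • (((s : ℚ) + 1) • xiTerm E F Hinv s Z) [SMOD rightIdeal F] :=
      SModEq.rfl.add ((invFallingProd_mul_pow_mul_F_smodEq hHE hHF hEF hHinv s _).smul _)
    _ = _ := by rw [smul_smul]; ring_nf

theorem xiTerm_succ_mul_H_smodEq (hHE : H * E - E * H = 2 * E)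
    (hHF : H * F - F * H = -(2 * F)) (hEF : E * F - F * E = H)
    (hHinv : ∀ k : ℤ, (H - k) * Hinv k = 1 ∧ Hinv k * (H - k) = 1) (s : ℕ) (Z : A) :
    xiTerm E F Hinv (s + 1) (Z * H)
      ≡ xiTerm E F Hinv (s + 1) Z * H - (2 * (s + 1) : ℚ) • xiTerm E F Hinv (s + 1) Z
        + (2 * (s + 1) ^ 2 : ℚ) • xiTerm E F Hinv s Z [SMOD rightIdeal F] := by
  have hWF : (ad F ^ s) Z * F = F * (ad F ^ s) Z - (ad F ^ (s + 1)) Z := by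
    rw [pow_succ', Module.End.mul_apply, ad_apply, sub_sub_cancel]
  have h : xiTerm E F Hinv (s + 1) (Z * H)
      = xiTerm E F Hinv (s + 1) Z * H - (2 * (s + 1) : ℚ) • xiTerm E F Hinv (s + 1) Z
        + (2 * (s + 1) : ℚ) • (invFallingProd Hinv (s + 1) * E ^ (s + 1) * (F * (ad F ^ s) Z)) := by
    rw [xiTerm, xiTerm, ad_pow_succ_mul_H hHF, hWF, mul_add, mul_smul_comm, mul_sub, smul_sub]
    simp only [mul_assoc]
    abel
  calc _ = _ := h
    _ ≡ xiTerm E F Hinv (s + 1) Z * H - (2 * (s + 1) : ℚ) • xiTerm E F Hinv (s + 1) Z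
        + (2 * (s + 1) : ℚ) • (((s : ℚ) + 1) • xiTerm E F Hinv s Z) [SMOD rightIdeal F] :=
      SModEq.rfl.add ((invFallingProd_mul_pow_mul_F_smodEq hHE hHF hEF hHinv s _).smul _)
    _ = _ := by rw [smul_smul]; ring_nf

theorem xi_H_mul_smodEq (hHE : H * E - E * H = 2 * E)
    (hHF : H * F - F * H = -(2 * F)) (hEF : E * F - F * E = H)
    (hHinv : ∀ k : ℤ, (H - k) * Hinv k = 1 ∧ Hinv k * (H - k) = 1) {K : ℕ} {Z : A}
    (hZ : (ad F ^ K) Z = 0) :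
    xi E F Hinv K (H * Z) ≡ (H + 2) * xi E F Hinv K Z [SMOD rightIdeal F] := by
  have h := sum_range_factorial_smodEq (rightIdeal F) (LinearMap.mulLeft ℚ H)
    (n := K) (u := fun s => xiTerm E F Hinv s Z) (w := fun s => xiTerm E F Hinv s (H * Z))
    (by simp [xiTerm]) (xiTerm_succ_H_mul_smodEq hHE hHF hEF hHinv · Z) (by simp [xiTerm, hZ])
  rwa [← xi_apply, ← xi_apply, LinearMap.mulLeft_apply, two_smul, ← two_mul, ← add_mul] at h

theorem xi_mul_H_smodEq (hHE : H * E - E * H = 2 * E)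
    (hHF : H * F - F * H = -(2 * F)) (hEF : E * F - F * E = H)
    (hHinv : ∀ k : ℤ, (H - k) * Hinv k = 1 ∧ Hinv k * (H - k) = 1) {K : ℕ} {Z : A}
    (hZ : (ad F ^ K) Z = 0) :
    xi E F Hinv K (Z * H) ≡ xi E F Hinv K Z * (H + 2) [SMOD rightIdeal F] := by
  have h := sum_range_factorial_smodEq (rightIdeal F) (LinearMap.mulRight ℚ H)
    (n := K) (u := fun s => xiTerm E F Hinv s Z) (w := fun s => xiTerm E F Hinv s (Z * H))
    (by simp [xiTerm]) (xiTerm_succ_mul_H_smodEq hHE hHF hEF hHinv · Z)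
    (by simp [xiTerm, hZ])
  rwa [← xi_apply, ← xi_apply, LinearMap.mulRight_apply, two_smul, ← mul_two, ← mul_add] at h

theorem xi_H_pow_mul_smodEq (hHE : H * E - E * H = 2 * E)
    (hHF : H * F - F * H = -(2 * F)) (hEF : E * F - F * E = H)
    (hHinv : ∀ k : ℤ, (H - k) * Hinv k = 1 ∧ Hinv k * (H - k) = 1) {N K : ℕ} {Z : A}
    (hZ : (ad F ^ N) Z = 0) (n : ℕ) (hK : N + n ≤ K) :
    xi E F Hinv K (H ^ n * Z) ≡ (H + 2) ^ n * xi E F Hinv K Z [SMOD rightIdeal F] := by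
  induction n with
  | zero => simp
  | succ n ih =>
    rw [pow_succ' H, mul_assoc, pow_succ', mul_assoc]
    exact (xi_H_mul_smodEq hHE hHF hEF hHinv
      (Module.End.pow_map_zero_of_le (by omega) (ad_pow_H_pow_mul_eq_zero hHF hZ n))).trans
      (smodEq_rightIdeal_mul_left (F_mul_H hHF).symm (ih (by omega)))

theorem xi_mul_H_pow_smodEq (hHE : H * E - E * H = 2 * E)
    (hHF : H * F - F * H = -(2 * F)) (hEF : E * F - F * E = H)
    (hHinv : ∀ k : ℤ, (H - k) * Hinv k = 1 ∧ Hinv k * (H - k) = 1) {N K : ℕ} {Z : A}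
    (hZ : (ad F ^ N) Z = 0) (n : ℕ) (hK : N + n ≤ K) :
    xi E F Hinv K (Z * H ^ n) ≡ xi E F Hinv K Z * (H + 2) ^ n [SMOD rightIdeal F] := by
  induction n with
  | zero => simp
  | succ n ih =>
    rw [pow_succ H, ← mul_assoc, pow_succ, ← mul_assoc]
    exact (xi_mul_H_smodEq hHE hHF hEF hHinv
      (Module.End.pow_map_zero_of_le (by omega) (ad_pow_mul_H_pow_eq_zero hHF hZ n))).trans
      (smodEq_rightIdeal_mul_right (ih (by omega)) _)

theorem eventually_xi_aeval_mul_smodEq (hHE : H * E - E * H = 2 * E)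
    (hHF : H * F - F * H = -(2 * F)) (hEF : E * F - F * E = H)
    (hHinv : ∀ k : ℤ, (H - k) * Hinv k = 1 ∧ Hinv k * (H - k) = 1) {N : ℕ} {Z : A}
    (hZ : (ad F ^ N) Z = 0) (p : ℚ[X]) :
    ∀ᶠ K in atTop,
      xi E F Hinv K (aeval H p * Z) ≡ aeval (H + 2) p * xi E F Hinv K Z [SMOD rightIdeal F] := by
  induction p using Polynomial.induction_on' with
  | add p q hp hq =>
    filter_upwards [hp, hq] with K hp hq
    simpa only [map_add, add_mul] using hp.add hq
  | monomial n a =>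
    filter_upwards [eventually_ge_atTop (N + n)] with K hK
    simpa only [aeval_monomial, ← Algebra.smul_def, smul_mul_assoc, map_smul]
      using (xi_H_pow_mul_smodEq hHE hHF hEF hHinv hZ n hK).smul a

theorem eventually_xi_mul_aeval_smodEq (hHE : H * E - E * H = 2 * E)
    (hHF : H * F - F * H = -(2 * F)) (hEF : E * F - F * E = H)
    (hHinv : ∀ k : ℤ, (H - k) * Hinv k = 1 ∧ Hinv k * (H - k) = 1) {N : ℕ} {Z : A}
    (hZ : (ad F ^ N) Z = 0) (p : ℚ[X]) :
    ∀ᶠ K in atTop,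
      xi E F Hinv K (Z * aeval H p) ≡ xi E F Hinv K Z * aeval (H + 2) p [SMOD rightIdeal F] := by
  induction p using Polynomial.induction_on' with
  | add p q hp hq =>
    filter_upwards [hp, hq] with K hp hq
    simpa only [map_add, mul_add] using hp.add hq
  | monomial n a =>
    filter_upwards [eventually_ge_atTop (N + n)] with K hK
    simpa only [aeval_monomial, ← Algebra.smul_def, mul_smul_comm, map_smul]
      using (xi_mul_H_pow_smodEq hHE hHF hEF hHinv hZ n hK).smul a

end Xi
end Zhelobenko

/-- rank-one Zhelobenko identities: let `A` be an associative
algebra containing `sl_2`-triple `E, F, H`, localized so that each `H - k`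
(`k ∈ ℤ`) has a two-sided inverse `Hinv k`.  For `Y ∈ A` with
`(ad F)^s Y = 0` for `s > M`, set
`ξ(Y) = Σ_{s=0}^{M} (s!)⁻¹ (H(H-1)⋯(H-s+1))⁻¹ E^s (ad F)^s(Y)`.
Then for any polynomial `X = p(H)` in the Cartan part,
`ξ(XY) ∈ p(H+2) ξ(Y) + J̄` and `ξ(YX) ∈ ξ(Y) p(H+2) + J̄`,
where `J̄ = F·A` is the right ideal generated by `F`. -/
theorem zhelobenko_extremal_identities
    {A : Type*} [Ring A] [Algebra ℚ A]
    (E F H : A)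
    (hHE : H * E - E * H = 2 * E)
    (hHF : H * F - F * H = -(2 * F))
    (hEF : E * F - F * E = H)
    (Hinv : ℤ → A)
    (hHinv : ∀ k : ℤ, (H - (k : A)) * Hinv k = 1 ∧ Hinv k * (H - (k : A)) = 1)
    (adF : A → A) (hadF : ∀ Z : A, adF Z = F * Z - Z * F)
    (xi : A → ℕ → A)
    (hxi : ∀ (Y : A) (M : ℕ),
      xi Y M = ∑ s ∈ Finset.range (M + 1),
        (((s.factorial : ℚ))⁻¹) •
          ((List.ofFn fun r : Fin s => Hinv ((r : ℕ) : ℤ)).prod * E ^ s * adF^[s] Y))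
    (p : Polynomial ℚ) (Y : A) (M : ℕ)
    (hnil : ∀ s : ℕ, M < s →
      adF^[s] Y = 0 ∧
      adF^[s] (Polynomial.aeval H p * Y) = 0 ∧
      adF^[s] (Y * Polynomial.aeval H p) = 0) :
    ∃ a b : A,
      xi (Polynomial.aeval H p * Y) M
        = Polynomial.aeval (H + 2) p * xi Y M + F * a ∧
      xi (Y * Polynomial.aeval H p) M
        = xi Y M * Polynomial.aeval (H + 2) p + F * b := by
  open Zhelobenko in
  obtain rfl : adF = ad F := funext hadF
  have hxi' : ∀ Z, xi Z M = Zhelobenko.xi E F Hinv M Z := fun Z => by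
    simp only [hxi, xi_apply, xiTerm, invFallingProd, ← Module.End.coe_pow]
  obtain ⟨hY, hpY, hYp⟩ := hnil (M + 1) M.lt_succ_self
  rw [← Module.End.coe_pow] at hY hpY hYp
  obtain ⟨K, hL, hR, hMK⟩ := ((eventually_xi_aeval_mul_smodEq hHE hHF hEF hHinv hY p).and
    ((eventually_xi_mul_aeval_smodEq hHE hHF hEF hHinv hY p).and (eventually_ge_atTop M))).exists
  rw [xi_eq_of_le hpY hMK, xi_eq_of_le hY hMK] at hL
  rw [xi_eq_of_le hYp hMK, xi_eq_of_le hY hMK] at hR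
  obtain ⟨a, ha⟩ := exists_eq_add_mul_of_smodEq hL
  obtain ⟨b, hb⟩ := exists_eq_add_mul_of_smodEq hR
  exact ⟨a, b, by rw [hxi', hxi', ha], by rw [hxi', hxi', hb]⟩
end

section
/- Let m = 2, and let λ = μ + ν with ν = (ν_1, ν_2), 0 ≤ ν_1 < ν_2 ≤ n, and μ_1 − μ_2 ∉ Z. In the quotient (modulo the relations E_{11} ↦ λ_1, E_{22} ↦ λ_2 coming from the ideal I_{σ_1∘μ} and the ideal J̄), the value of the Zhelobenko sum Σ_{s=0}^{d} d!/((d−s)! H^{(s)}) applied to the weight vector w, where d = ν_2 − ν_1 and H^{(s)} = Π_{r=1}^s (H − r + 1) with H acting on w as the scalar λ_2 − λ_1 − 2, equals ((λ_1 − λ_2 + 1)/(μ_1 − μ_2 + 1)) · w. -/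
/-!
Write `c = λ₂ - λ₁ - 1`, so that `H^{(s)} = ∏_{r=1}^{s} (c - r)` and `d!/(d-s)!` is the falling
factorial `d^{(s)}`; call the sum `S_d(c)`. Splitting off `s = 0` and the factor `c - 1` of every
other denominator gives `S_{d+1}(c) = 1 + (d+1)/(c-1) · S_d(c-1)`, whence `(c - d) · S_d(c) = c` by induction on
`d`. Since `c - d = μ₂ - μ₁ - 1` and `c = λ₂ - λ₁ - 1`, this is the claimed value; every denominator
`c - r` is `μ₂ - μ₁` plus an integer, hence nonzero.
-/

open Finset

lemma prod_Icc_one_sub_succ {R : Type*} [CommRing R] (c : R) (s : ℕ) :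
    ∏ r ∈ Icc 1 (s + 1), (c - r) = (c - 1) * ∏ r ∈ Icc 1 s, (c - 1 - r) := by
  induction s with
  | zero => simp
  | succ s ih =>
    rw [prod_Icc_succ_top (by omega), ih, prod_Icc_succ_top (by omega)]
    push_cast
    ring

lemma sub_mul_sum_descFactorial_div_prod_Icc_sub {K : Type*} [Field K] (d : ℕ) (c : K)
    (hc : ∀ r ∈ Icc 1 d, c - r ≠ 0) :
    (c - d) * ∑ s ∈ range (d + 1), (d.descFactorial s : K) / ∏ r ∈ Icc 1 s, (c - r) = c := by
  induction d generalizing c with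
  | zero => simp
  | succ d ih =>
    have hc₁ : c - 1 ≠ 0 := by simpa using hc 1 (by simp)
    have ih' : (c - 1 - d) * ∑ s ∈ range (d + 1),
        (d.descFactorial s : K) / ∏ r ∈ Icc 1 s, (c - 1 - r) = c - 1 := by
      refine ih (c - 1) fun r hr => ?_
      have := hc (r + 1) (by simp only [mem_Icc] at hr ⊢; omega)
      rwa [Nat.cast_succ, ← sub_sub, sub_right_comm] at this
    have hshift : ∀ s ∈ range (d + 1),
        ((d + 1).descFactorial (s + 1) : K) / ∏ r ∈ Icc 1 (s + 1), (c - r)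
          = (d + 1) / (c - 1) * ((d.descFactorial s : K) / ∏ r ∈ Icc 1 s, (c - 1 - r)) := by
      intro s _
      rw [Nat.succ_descFactorial_succ, prod_Icc_one_sub_succ, div_mul_div_comm]
      push_cast
      rfl
    rw [sum_range_succ', sum_congr rfl hshift, ← mul_sum, Nat.descFactorial_zero, Icc_eq_empty (by omega), prod_empty, Nat.cast_one, div_one,
      mul_add, mul_left_comm, Nat.cast_succ, ← sub_sub, sub_right_comm, ih', div_mul_cancel₀ _ hc₁]
    ring

lemma factorial_div_factorial_sub_mul {K : Type*} [Field K] [CharZero K] {d s : ℕ} (hs : s ≤ d)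
    (x : K) : (d.factorial : K) / ((d - s).factorial * x) = d.descFactorial s / x := by
  rw [← Nat.factorial_mul_descFactorial hs, Nat.cast_mul,
    mul_div_mul_left _ _ (Nat.cast_ne_zero.mpr (Nat.factorial_ne_zero _))]

theorem zhelobenko_scalar_value_general
    {M : Type*} [AddCommGroup M] [Module ℂ M]
    (ν₁ ν₂ : ℕ) (μ₁ μ₂ la₁ la₂ : ℂ)
    (hν : ν₁ < ν₂)
    (hla₁ : la₁ = μ₁ + (ν₁ : ℂ)) (hla₂ : la₂ = μ₂ + (ν₂ : ℂ))
    (hμ : ∀ k : ℤ, μ₁ - μ₂ ≠ (k : ℂ))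
    (d : ℕ) (hd : d = ν₂ - ν₁) (w : M) :
    (∑ s ∈ Finset.range (d + 1),
        (d.factorial : ℂ) /
          (((d - s).factorial : ℂ) *
            ∏ r ∈ Finset.Icc 1 s, ((la₂ - la₁ - 2) - (r : ℂ) + 1))) • w
      = ((la₁ - la₂ + 1) / (μ₁ - μ₂ + 1)) • w := by
  have hdν : (d : ℂ) = ν₂ - ν₁ := by rw [hd, Nat.cast_sub hν.le]
  set c : ℂ := la₂ - la₁ - 1
  have hc_sub : ∀ k : ℤ, c - k ≠ 0 := fun k hk =>
    hμ (d - 1 - k) (by push_cast; linear_combination -hk + hla₂ - hla₁ - hdν)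
  have hsum : ∑ s ∈ range (d + 1), (d.factorial : ℂ) /
      ((d - s).factorial * ∏ r ∈ Icc 1 s, ((la₂ - la₁ - 2) - (r : ℂ) + 1)) = c / (c - d) := by
    rw [eq_div_iff (by exact_mod_cast hc_sub d), mul_comm]
    refine .trans (congrArg _ (sum_congr rfl fun s hs => ?_))
      (sub_mul_sum_descFactorial_div_prod_Icc_sub d c fun r _ => by exact_mod_cast hc_sub r)
    rw [factorial_div_factorial_sub_mul (Nat.lt_succ_iff.mp (mem_range.mp hs))]
    exact congrArg _ (prod_congr rfl fun r _ => by ring)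
  rw [hsum, ← neg_div_neg_eq]
  congr 2
  · ring
  · linear_combination hdν - hla₂ + hla₁

/-- the rank-one scalar computation in Proposition 3.7: with
`m = 2`, `λ = μ + ν`, `0 ≤ ν₁ < ν₂ ≤ n`, `μ₁ - μ₂ ∉ ℤ` and `d = ν₂ - ν₁`,
the Zhelobenko sum `Σ_{s=0}^{d} d!/((d-s)! H^{(s)})` applied to the weight
vector `w`, where `H^{(s)} = Π_{r=1}^{s}(H - r + 1)` and `H` acts on `w` as
the scalar `λ₂ - λ₁ - 2`, equals `((λ₁ - λ₂ + 1)/(μ₁ - μ₂ + 1)) · w`. -/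
theorem zhelobenko_scalar_value
    {M : Type*} [AddCommGroup M] [Module ℂ M]
    (n ν₁ ν₂ : ℕ) (μ₁ μ₂ la₁ la₂ : ℂ)
    (hν : ν₁ < ν₂) (hνn : ν₂ ≤ n)
    (hla₁ : la₁ = μ₁ + (ν₁ : ℂ)) (hla₂ : la₂ = μ₂ + (ν₂ : ℂ))
    (hμ : ∀ k : ℤ, μ₁ - μ₂ ≠ (k : ℂ))
    (d : ℕ) (hd : d = ν₂ - ν₁) (w : M) :
    (∑ s ∈ Finset.range (d + 1),
        (d.factorial : ℂ) /
          (((d - s).factorial : ℂ) *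
            ∏ r ∈ Finset.Icc 1 s, ((la₂ - la₁ - 2) - (r : ℂ) + 1))) • w
      = ((la₁ - la₂ + 1) / (μ₁ - μ₂ + 1)) • w :=
  zhelobenko_scalar_value_general ν₁ ν₂ μ₁ μ₂ la₁ la₂ hν hla₁ hla₂ hμ d hd w
end
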